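/- Let n ≥ 1, let V and E be finite-dimensional real inner product spaces, and let A(D) be a homogeneous constant-coefficient linear differential operator of order k ≥ 1 from V to E on ℝⁿ which is injectively elliptic. Then there exists a homogeneous constant-coefficient linear differential operator L(D) (of some order m ≥ 1) from E to E on ℝⁿ such that for every ξ ∈ ℝⁿ \ {0} one has A(ξ)[V] = ker L(ξ), i.e., the range of the symbol A(ξ) : V → E equals the kernel of the symbol L(ξ) : E → E. -/

import Mathlib

open MeasureTheory

/-- The symmetric tensor `ξ^{⊗k} ⊗ v`, viewed as the continuous `k`-linear map
`(h₁, …, h_k) ↦ (ξ·h₁)⋯(ξ·h_k) v`, linearly in `v`. -/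
noncomputable def tensorPow {n : ℕ} (k : ℕ) {V : Type*} [NormedAddCommGroup V] [NormedSpace ℝ V]
    (ξ : EuclideanSpace ℝ (Fin n)) :
    V →ₗ[ℝ] ContinuousMultilinearMap ℝ (fun _ : Fin k => EuclideanSpace ℝ (Fin n)) V where
  toFun v := (ContinuousMultilinearMap.mkPiRing ℝ (Fin k) v).compContinuousLinearMap
      (fun _ => innerSL ℝ ξ)
  map_add' v w := by
    ext m
    simp only [ContinuousMultilinearMap.compContinuousLinearMap_apply,
      ContinuousMultilinearMap.mkPiRing_apply, ContinuousMultilinearMap.add_apply, smul_add]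
  map_smul' c v := by
    ext m
    simp only [ContinuousMultilinearMap.compContinuousLinearMap_apply,
      ContinuousMultilinearMap.mkPiRing_apply, ContinuousMultilinearMap.smul_apply,
      RingHom.id_apply]
    rw [smul_comm]

/-- The symbol `A(ξ) : V → E` of the homogeneous constant-coefficient differential operator
of order `k` given by the linear map `A` on symmetric `k`-linear maps:
`A(ξ)[v] = A[(h₁,…,h_k) ↦ (ξ·h₁)⋯(ξ·h_k) v]`. -/
noncomputable def symbol {n k : ℕ} {V E : Type*} [NormedAddCommGroup V] [NormedSpace ℝ V]
    [NormedAddCommGroup E] [NormedSpace ℝ E]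
    (A : ContinuousMultilinearMap ℝ (fun _ : Fin k => EuclideanSpace ℝ (Fin n)) V →ₗ[ℝ] E)
    (ξ : EuclideanSpace ℝ (Fin n)) : V →ₗ[ℝ] E :=
  A ∘ₗ tensorPow k ξ

/-! The symbol `ξ ↦ A(ξ)` is a homogeneous polynomial of degree `k` in `ξ` with values in
`V →ₗ E`, i.e. a combination of maps `ξ ↦ ξ_{f 1} ⋯ ξ_{f k} • c`, and conversely every
homogeneous polynomial of degree `m` with values in `E →ₗ E` is the symbol of an operator of
order `m`. For `ξ ≠ 0` ellipticity makes the Gram operator `G = A(ξ)† A(ξ)` invertible, and then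
`det G • 1 - A(ξ) adj(G) A(ξ)†` is `det G` times the orthogonal projection onto
`(range A(ξ))ᗮ`, so its kernel is `range A(ξ)`; its entries are polynomials of degree
`2k · dim V` in `ξ`. Multiplying by `⟪ξ, ξ⟫` keeps these kernels and makes the order positive. -/

open scoped InnerProductSpace

noncomputable section

def coordMonomial {n m : ℕ} (f : Fin m → Fin n) (ξ : EuclideanSpace ℝ (Fin n)) : ℝ :=
  ∏ i, ξ (f i)

lemma coordMonomial_append {n m₁ m₂ : ℕ} (f : Fin m₁ → Fin n) (g : Fin m₂ → Fin n)
    (ξ : EuclideanSpace ℝ (Fin n)) :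
    coordMonomial (Fin.append f g) ξ = coordMonomial f ξ * coordMonomial g ξ := by
  simp [coordMonomial, Fin.prod_univ_add]

def homogeneousPolyMaps (n m : ℕ) (W : Type*) [AddCommGroup W] [Module ℝ W] :
    Submodule ℝ (EuclideanSpace ℝ (Fin n) → W) :=
  Submodule.span ℝ {Φ | ∃ (f : Fin m → Fin n) (c : W), Φ = fun ξ => coordMonomial f ξ • c}

namespace homogeneousPolyMaps

variable {n m m₁ m₂ : ℕ} {W W₁ W₂ W₃ : Type*} [AddCommGroup W] [Module ℝ W]
  [AddCommGroup W₁] [Module ℝ W₁] [AddCommGroup W₂] [Module ℝ W₂]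
  [AddCommGroup W₃] [Module ℝ W₃]

lemma coordMonomial_smul_mem (f : Fin m → Fin n) (c : W) :
    (fun ξ => coordMonomial f ξ • c) ∈ homogeneousPolyMaps n m W :=
  Submodule.subset_span ⟨f, c, rfl⟩

lemma const_mem (c : W) : (fun _ => c) ∈ homogeneousPolyMaps n 0 W := by
  simpa [coordMonomial] using coordMonomial_smul_mem (Fin.elim0 : Fin 0 → Fin n) c

lemma fun_sum_mem {ι : Type*} (s : Finset ι) {Φ : ι → EuclideanSpace ℝ (Fin n) → W}
    (h : ∀ i ∈ s, Φ i ∈ homogeneousPolyMaps n m W) :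
    (fun ξ => ∑ i ∈ s, Φ i ξ) ∈ homogeneousPolyMaps n m W := by
  simpa only [← Finset.sum_fn] using Submodule.sum_mem _ h

lemma map_mem (L : W₁ →ₗ[ℝ] W₂) {Φ : EuclideanSpace ℝ (Fin n) → W₁}
    (hΦ : Φ ∈ homogeneousPolyMaps n m W₁) :
    (fun ξ => L (Φ ξ)) ∈ homogeneousPolyMaps n m W₂ := by
  have := Submodule.mem_map_of_mem (f := L.compLeft _) hΦ
  rw [homogeneousPolyMaps, Submodule.map_span] at this
  refine Submodule.span_le.mpr ?_ this
  rintro _ ⟨_, ⟨f, c, rfl⟩, rfl⟩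
  rw [SetLike.mem_coe]
  convert coordMonomial_smul_mem f (L c) using 1
  funext ξ
  simp

def pointwiseMap₂ (X : Type*) (B : W₁ →ₗ[ℝ] W₂ →ₗ[ℝ] W₃) :
    (X → W₁) →ₗ[ℝ] (X → W₂) →ₗ[ℝ] (X → W₃) :=
  LinearMap.mk₂ ℝ (fun Φ Ψ ξ => B (Φ ξ) (Ψ ξ)) (by intros; funext; simp) (by intros; funext; simp)
    (by intros; funext; simp) (by intros; funext; simp)

lemma map₂_mem (B : W₁ →ₗ[ℝ] W₂ →ₗ[ℝ] W₃) {Φ : EuclideanSpace ℝ (Fin n) → W₁}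
    {Ψ : EuclideanSpace ℝ (Fin n) → W₂} (hΦ : Φ ∈ homogeneousPolyMaps n m₁ W₁)
    (hΨ : Ψ ∈ homogeneousPolyMaps n m₂ W₂) :
    (fun ξ => B (Φ ξ) (Ψ ξ)) ∈ homogeneousPolyMaps n (m₁ + m₂) W₃ := by
  have := Submodule.apply_mem_map₂ (pointwiseMap₂ _ B) hΦ hΨ
  rw [homogeneousPolyMaps, homogeneousPolyMaps, Submodule.map₂_span_span] at this
  refine Submodule.span_le.mpr ?_ this
  rintro _ ⟨_, ⟨f, c, rfl⟩, _, ⟨g, d, rfl⟩, rfl⟩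
  rw [SetLike.mem_coe]
  convert coordMonomial_smul_mem (Fin.append f g) (B c d) using 1
  funext ξ
  simp [pointwiseMap₂, coordMonomial_append, mul_smul, smul_comm (coordMonomial f ξ)]

lemma fun_smul_mem {p : EuclideanSpace ℝ (Fin n) → ℝ} {Φ : EuclideanSpace ℝ (Fin n) → W}
    (hp : p ∈ homogeneousPolyMaps n m₁ ℝ) (hΦ : Φ ∈ homogeneousPolyMaps n m₂ W) :
    (fun ξ => p ξ • Φ ξ) ∈ homogeneousPolyMaps n (m₁ + m₂) W :=
  map₂_mem (LinearMap.lsmul ℝ W) hp hΦ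

lemma comp_mem {Φ : EuclideanSpace ℝ (Fin n) → W₂ →ₗ[ℝ] W₃}
    {Ψ : EuclideanSpace ℝ (Fin n) → W₁ →ₗ[ℝ] W₂}
    (hΦ : Φ ∈ homogeneousPolyMaps n m₁ _) (hΨ : Ψ ∈ homogeneousPolyMaps n m₂ _) :
    (fun ξ => Φ ξ ∘ₗ Ψ ξ) ∈ homogeneousPolyMaps n (m₁ + m₂) (W₁ →ₗ[ℝ] W₃) :=
  map₂_mem (LinearMap.llcomp ℝ W₁ W₂ W₃) hΦ hΨ

lemma prod_mem {ι : Type*} (s : Finset ι) {p : ι → EuclideanSpace ℝ (Fin n) → ℝ}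
    (h : ∀ i ∈ s, p i ∈ homogeneousPolyMaps n m ℝ) :
    (fun ξ => ∏ i ∈ s, p i ξ) ∈ homogeneousPolyMaps n (s.card * m) ℝ := by
  classical
  induction s using Finset.induction_on with
  | empty => simpa using const_mem (1 : ℝ)
  | insert a s ha ih =>
    simp only [Finset.prod_insert ha, Finset.card_insert_of_notMem ha, add_one_mul, add_comm _ m]
    exact map₂_mem (LinearMap.mul ℝ ℝ) (h a (s.mem_insert_self a))
      (ih fun i hi => h i (Finset.mem_insert_of_mem hi))

lemma diagonal_mem (F : MultilinearMap ℝ (fun _ : Fin m => EuclideanSpace ℝ (Fin n)) W) :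
    (fun ξ => F fun _ => ξ) ∈ homogeneousPolyMaps n m W := by
  have hF ξ : (F fun _ => ξ) =
      ∑ r : Fin m → Fin n, coordMonomial r ξ • F fun i => EuclideanSpace.single (r i) 1 := by
    conv_lhs => rw [← (EuclideanSpace.basisFun (Fin n) ℝ).sum_repr ξ]
    simp [F.map_sum, F.map_smul_univ, coordMonomial]
  simp_rw [hF]
  exact fun_sum_mem _ fun r _ => coordMonomial_smul_mem r _

lemma id_mem : (fun ξ => ξ) ∈ homogeneousPolyMaps n 1 (EuclideanSpace ℝ (Fin n)) :=
  diagonal_mem (MultilinearMap.ofSubsingleton ℝ _ _ 0 LinearMap.id)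

lemma inner_self_mem :
    (fun ξ : EuclideanSpace ℝ (Fin n) => ⟪ξ, ξ⟫_ℝ) ∈ homogeneousPolyMaps n 2 ℝ := by
  simpa using map₂_mem (innerₗ (EuclideanSpace ℝ (Fin n))) id_mem id_mem

lemma matrix_mem {ι : Type*} [Fintype ι] [DecidableEq ι]
    {M : EuclideanSpace ℝ (Fin n) → Matrix ι ι ℝ}
    (h : ∀ i j, (fun ξ => M ξ i j) ∈ homogeneousPolyMaps n m ℝ) :
    M ∈ homogeneousPolyMaps n m (Matrix ι ι ℝ) := by
  have hM : M = fun ξ => ∑ i, ∑ j, M ξ i j • Matrix.single i j (1 : ℝ) := by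
    funext ξ
    simpa using Matrix.matrix_eq_sum_single (M ξ)
  rw [hM]
  refine fun_sum_mem _ fun i _ => fun_sum_mem _ fun j _ => ?_
  simpa using fun_smul_mem (h i j) (const_mem (Matrix.single i j (1 : ℝ)))

lemma det_mem {ι : Type*} [Fintype ι] [DecidableEq ι]
    {M : EuclideanSpace ℝ (Fin n) → Matrix ι ι ℝ}
    (h : ∀ i j, (fun ξ => M ξ i j) ∈ homogeneousPolyMaps n m ℝ) :
    (fun ξ => (M ξ).det) ∈ homogeneousPolyMaps n (Fintype.card ι * m) ℝ := by
  simp_rw [Matrix.det_apply', ← Finset.card_univ]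
  exact fun_sum_mem _ fun σ _ => Submodule.smul_mem _ _ (prod_mem _ fun i _ => h (σ i) i)

lemma adjugate_mem {d : ℕ} {M : EuclideanSpace ℝ (Fin n) → Matrix (Fin (d + 1)) (Fin (d + 1)) ℝ}
    (h : ∀ i j, (fun ξ => M ξ i j) ∈ homogeneousPolyMaps n m ℝ) :
    (fun ξ => (M ξ).adjugate) ∈ homogeneousPolyMaps n (d * m) (Matrix _ _ ℝ) := by
  refine matrix_mem fun i j => ?_
  simp_rw [Matrix.adjugate_fin_succ_eq_det_submatrix]
  have hdet := det_mem (M := fun ξ => (M ξ).submatrix j.succAbove i.succAbove) fun _ _ => h _ _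
  rw [Fintype.card_fin] at hdet
  exact Submodule.smul_mem _ ((-1) ^ (j + i : ℕ)) hdet

lemma tensorPow_mem (k : ℕ) (V : Type*) [NormedAddCommGroup V] [NormedSpace ℝ V] :
    (fun ξ => tensorPow (n := n) k (V := V) ξ) ∈ homogeneousPolyMaps n k _ :=
  -- the diagonal of `(ξ₁, …, ξ_k) ↦ (v ↦ ((h₁, …, h_k) ↦ ⟪ξ₁, h₁⟫ ⋯ ⟪ξ_k, h_k⟫ • v))`
  diagonal_mem <|
    (LinearMap.lcomp ℝ _
        (ContinuousMultilinearMap.piFieldEquiv ℝ (Fin k) V).toLinearEquiv.toLinearMap ∘ₗ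
      ContinuousLinearMap.coeLM ℝ).compMultilinearMap
    ((ContinuousMultilinearMap.compContinuousLinearMapMultilinear ℝ _ _ V).compLinearMap
      fun _ => (innerSL ℝ : EuclideanSpace ℝ (Fin n) →L[ℝ] _ →L[ℝ] ℝ).toLinearMap)

lemma symbol_mem {k : ℕ} {V E : Type*} [NormedAddCommGroup V] [NormedSpace ℝ V]
    [NormedAddCommGroup E] [NormedSpace ℝ E]
    (A : ContinuousMultilinearMap ℝ (fun _ : Fin k => EuclideanSpace ℝ (Fin n)) V →ₗ[ℝ] E) :
    (fun ξ => symbol A ξ) ∈ homogeneousPolyMaps n k (V →ₗ[ℝ] E) :=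
  map_mem (LinearMap.llcomp ℝ V _ E A) (tensorPow_mem k V)

end homogeneousPolyMaps

lemma exists_symbol_eq_of_mem_homogeneousPolyMaps {n m : ℕ} {E W : Type*}
    [NormedAddCommGroup E] [NormedSpace ℝ E] [NormedAddCommGroup W] [NormedSpace ℝ W]
    {Φ : EuclideanSpace ℝ (Fin n) → E →ₗ[ℝ] W} (hΦ : Φ ∈ homogeneousPolyMaps n m (E →ₗ[ℝ] W)) :
    ∃ L : ContinuousMultilinearMap ℝ (fun _ : Fin m => EuclideanSpace ℝ (Fin n)) E →ₗ[ℝ] W,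
      ∀ ξ, symbol L ξ = Φ ξ := by
  let S : (ContinuousMultilinearMap ℝ (fun _ : Fin m => EuclideanSpace ℝ (Fin n)) E →ₗ[ℝ] W) →ₗ[ℝ]
      (EuclideanSpace ℝ (Fin n) → E →ₗ[ℝ] W) :=
    LinearMap.pi fun ξ => LinearMap.lcomp ℝ W (tensorPow m ξ)
  suffices homogeneousPolyMaps n m (E →ₗ[ℝ] W) ≤ LinearMap.range S by
    obtain ⟨L, hL⟩ := this hΦ
    exact ⟨L, congr_fun hL⟩
  refine Submodule.span_le.mpr ?_
  rintro _ ⟨f, c, rfl⟩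
  refine ⟨c ∘ₗ
    (ContinuousMultilinearMap.apply ℝ _ E fun i => EuclideanSpace.single (f i) 1).toLinearMap, ?_⟩
  ext ξ e
  simp [S, tensorPow, coordMonomial, EuclideanSpace.inner_single_right]

section RangeComplement

variable {ι V E : Type*} [Fintype ι] [DecidableEq ι]
  [NormedAddCommGroup V] [InnerProductSpace ℝ V] [FiniteDimensional ℝ V]
  [NormedAddCommGroup E] [InnerProductSpace ℝ E] [FiniteDimensional ℝ E]

/-- `det (B†B) • (1 - B (B†B)⁻¹ B†)`, with the inverse written through the adjugate so that the
operator depends polynomially on `B`. -/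
def rangeComplOp (b : Module.Basis ι ℝ V) (B : V →ₗ[ℝ] E) : E →ₗ[ℝ] E :=
  (LinearMap.toMatrix b b (B.adjoint ∘ₗ B)).det • LinearMap.id -
    B ∘ₗ Matrix.toLin b b (LinearMap.toMatrix b b (B.adjoint ∘ₗ B)).adjugate ∘ₗ B.adjoint

lemma ker_rangeComplOp (b : Module.Basis ι ℝ V) {B : V →ₗ[ℝ] E} (hB : LinearMap.ker B = ⊥) :
    LinearMap.ker (rangeComplOp b B) = LinearMap.range B := by
  set M := LinearMap.toMatrix b b (B.adjoint ∘ₗ B)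
  set J := Matrix.toLin b b M.adjugate
  have hJ : J ∘ₗ (B.adjoint ∘ₗ B) = M.det • LinearMap.id := by
    rw [← Matrix.toLin_toMatrix b b (B.adjoint ∘ₗ B), ← Matrix.toLin_mul, Matrix.adjugate_mul,
      map_smul, Matrix.toLin_one]
  have hdet : M.det ≠ 0 := by
    rw [LinearMap.det_toMatrix, Ne, LinearMap.det_eq_zero_iff_ker_ne_bot, not_not,
      LinearMap.ker_adjoint_comp_self, hB]
  ext e
  constructor
  · intro he
    have hBJ : M.det • e = B (J (B.adjoint e)) := sub_eq_zero.mp he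
    exact ⟨M.det⁻¹ • J (B.adjoint e), by rw [map_smul, ← hBJ, inv_smul_smul₀ hdet]⟩
  · rintro ⟨v, rfl⟩
    change M.det • B v - B (J (B.adjoint (B v))) = 0
    rw [← LinearMap.comp_apply B.adjoint, ← LinearMap.comp_apply J, hJ]
    simp

lemma homogeneousPolyMaps.rangeComplOp_mem {n k d : ℕ} (b : Module.Basis (Fin d) ℝ V)
    {B : EuclideanSpace ℝ (Fin n) → V →ₗ[ℝ] E} (hB : B ∈ homogeneousPolyMaps n k _) :
    (fun ξ => rangeComplOp b (B ξ)) ∈ homogeneousPolyMaps n (d * (k + k)) (E →ₗ[ℝ] E) := by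
  have hB' : (fun ξ => (B ξ).adjoint) ∈ homogeneousPolyMaps n k _ :=
    map_mem LinearMap.adjoint.toLinearMap hB
  have hM (i j) : (fun ξ => LinearMap.toMatrix b b ((B ξ).adjoint ∘ₗ B ξ) i j) ∈
      homogeneousPolyMaps n (k + k) ℝ :=
    map_mem ((Matrix.entryLinearMap ℝ ℝ i j) ∘ₗ (LinearMap.toMatrix b b).toLinearMap)
      (comp_mem hB' hB)
  refine Submodule.sub_mem _ ?_ ?_
  · simpa using fun_smul_mem (det_mem hM) (const_mem (LinearMap.id : E →ₗ[ℝ] E))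
  · cases d with
    | zero =>
      simp only [Subsingleton.elim (Matrix.adjugate _) 0, map_zero, LinearMap.zero_comp,
        LinearMap.comp_zero]
      exact zero_mem _
    | succ d =>
      rw [show (d + 1) * (k + k) = k + (d * (k + k) + k) by ring]
      exact comp_mem hB (comp_mem (map_mem (Matrix.toLin b b).toLinearMap (adjugate_mem hM)) hB')

end RangeComplement

theorem stmt4_general {n k : ℕ}
    {V E : Type*} [NormedAddCommGroup V] [InnerProductSpace ℝ V] [FiniteDimensional ℝ V]
    [NormedAddCommGroup E] [InnerProductSpace ℝ E] [FiniteDimensional ℝ E]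
    (A : ContinuousMultilinearMap ℝ (fun _ : Fin k => EuclideanSpace ℝ (Fin n)) V →ₗ[ℝ] E)
    (hA : ∀ ξ : EuclideanSpace ℝ (Fin n), ξ ≠ 0 → LinearMap.ker (symbol A ξ) = ⊥) :
    ∃ (m : ℕ), 1 ≤ m ∧
      ∃ L : ContinuousMultilinearMap ℝ (fun _ : Fin m => EuclideanSpace ℝ (Fin n)) E →ₗ[ℝ] E,
        ∀ ξ : EuclideanSpace ℝ (Fin n), ξ ≠ 0 →
          LinearMap.range (symbol A ξ) = LinearMap.ker (symbol L ξ) := by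
  let b := Module.finBasis ℝ V
  obtain ⟨L, hL⟩ := exists_symbol_eq_of_mem_homogeneousPolyMaps <|
    homogeneousPolyMaps.fun_smul_mem homogeneousPolyMaps.inner_self_mem
      (homogeneousPolyMaps.rangeComplOp_mem b (homogeneousPolyMaps.symbol_mem A))
  refine ⟨_, by omega, L, fun ξ hξ => ?_⟩
  rw [hL, LinearMap.ker_smul _ _ (inner_self_ne_zero.mpr hξ), ker_rangeComplOp b (hA ξ hξ)]

/-- Existence of compatibility conditions: if `A(D)` is injectively elliptic of order `k ≥ 1`
from `V` to `E`, there is a homogeneous constant-coefficient operator `L(D)` of some order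
`m ≥ 1` from `E` to `E` whose symbol satisfies `ker L(ξ) = A(ξ)[V]` for all `ξ ≠ 0`. -/
theorem stmt4 {n k : ℕ} (hn : 1 ≤ n) (hk : 1 ≤ k)
    {V E : Type*} [NormedAddCommGroup V] [InnerProductSpace ℝ V] [FiniteDimensional ℝ V]
    [NormedAddCommGroup E] [InnerProductSpace ℝ E] [FiniteDimensional ℝ E]
    (A : ContinuousMultilinearMap ℝ (fun _ : Fin k => EuclideanSpace ℝ (Fin n)) V →ₗ[ℝ] E)
    (hA : ∀ ξ : EuclideanSpace ℝ (Fin n), ξ ≠ 0 → LinearMap.ker (symbol A ξ) = ⊥) :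
    ∃ (m : ℕ), 1 ≤ m ∧
      ∃ L : ContinuousMultilinearMap ℝ (fun _ : Fin m => EuclideanSpace ℝ (Fin n)) E →ₗ[ℝ] E,
        ∀ ξ : EuclideanSpace ℝ (Fin n), ξ ≠ 0 →
          LinearMap.range (symbol A ξ) = LinearMap.ker (symbol L ξ) :=
  stmt4_general A hA
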